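/- arXiv:2112.04183 — 8 statements merged into one kernel-verified Lean document; each statement's English description precedes it below -/
import Mathlib

section
/- Every twin-distance-hereditary digraph is an extended directed co-graph. -/
/-- Arc relation of the induced subdigraph on a vertex set `S`. -/
def restrict (A : ℕ → ℕ → Prop) (S : Finset ℕ) : ℕ → ℕ → Prop :=
  fun x y => A x y ∧ x ∈ S ∧ y ∈ S

/-- `walkLen A n u v`: there is a directed walk of length `n` from `u` to `v`. -/
def walkLen (A : ℕ → ℕ → Prop) : ℕ → ℕ → ℕ → Prop
  | 0, u, v => u = v
  | n + 1, u, v => ∃ w, A u w ∧ walkLen A n w v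

/-- `v` is reachable from `u` by a directed walk. -/
def Reach (A : ℕ → ℕ → Prop) (u v : ℕ) : Prop :=
  ∃ n, walkLen A n u v

/-- Directed distance: length of a shortest directed walk (= shortest directed path). -/
noncomputable def ddist (A : ℕ → ℕ → Prop) (u v : ℕ) : ℕ :=
  sInf {n | walkLen A n u v}

/-- `x` and `y` are directed twins: `N⁻(x)\{y} = N⁻(y)\{x}` and `N⁺(x)\{y} = N⁺(y)\{x}`. -/
def DTwins (A : ℕ → ℕ → Prop) (x y : ℕ) : Prop :=
  x ≠ y ∧
    {w | A w x} \ {y} = {w | A w y} \ {x} ∧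
    {w | A x w} \ {y} = {w | A y w} \ {x}

/-- The arc relation obtained by adding a new vertex `u` as a directed twin of `v`;
`auv`, `avu` determine which of the arcs `(u,v)`, `(v,u)` are present (any of the
four adjacency patterns between the twins). -/
def twinArc (A : ℕ → ℕ → Prop) (v u : ℕ) (auv avu : Prop) : ℕ → ℕ → Prop :=
  fun x y => A x y ∨ (x = u ∧ y = v ∧ auv) ∨ (x = v ∧ y = u ∧ avu) ∨
    (x = u ∧ A v y) ∨ (y = u ∧ A x v)

/-- Directed co-graphs: single vertices, disjoint union, series and order composition. -/
inductive DCo : Finset ℕ → (ℕ → ℕ → Prop) → Prop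
  | single (v : ℕ) : DCo {v} (fun _ _ => False)
  | union {V₁ V₂ : Finset ℕ} {A₁ A₂ : ℕ → ℕ → Prop} :
      Disjoint V₁ V₂ → DCo V₁ A₁ → DCo V₂ A₂ →
      DCo (V₁ ∪ V₂) (fun x y => A₁ x y ∨ A₂ x y)
  | series {V₁ V₂ : Finset ℕ} {A₁ A₂ : ℕ → ℕ → Prop} :
      Disjoint V₁ V₂ → DCo V₁ A₁ → DCo V₂ A₂ →
      DCo (V₁ ∪ V₂)
        (fun x y => A₁ x y ∨ A₂ x y ∨ (x ∈ V₁ ∧ y ∈ V₂) ∨ (x ∈ V₂ ∧ y ∈ V₁))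
  | order {V₁ V₂ : Finset ℕ} {A₁ A₂ : ℕ → ℕ → Prop} :
      Disjoint V₁ V₂ → DCo V₁ A₁ → DCo V₂ A₂ →
      DCo (V₁ ∪ V₂) (fun x y => A₁ x y ∨ A₂ x y ∨ (x ∈ V₁ ∧ y ∈ V₂))

/-- Extended directed co-graphs: additionally closed under directed union. -/
inductive ExtDCo : Finset ℕ → (ℕ → ℕ → Prop) → Prop
  | single (v : ℕ) : ExtDCo {v} (fun _ _ => False)
  | union {V₁ V₂ : Finset ℕ} {A₁ A₂ : ℕ → ℕ → Prop} :
      Disjoint V₁ V₂ → ExtDCo V₁ A₁ → ExtDCo V₂ A₂ →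
      ExtDCo (V₁ ∪ V₂) (fun x y => A₁ x y ∨ A₂ x y)
  | series {V₁ V₂ : Finset ℕ} {A₁ A₂ : ℕ → ℕ → Prop} :
      Disjoint V₁ V₂ → ExtDCo V₁ A₁ → ExtDCo V₂ A₂ →
      ExtDCo (V₁ ∪ V₂)
        (fun x y => A₁ x y ∨ A₂ x y ∨ (x ∈ V₁ ∧ y ∈ V₂) ∨ (x ∈ V₂ ∧ y ∈ V₁))
  | order {V₁ V₂ : Finset ℕ} {A₁ A₂ : ℕ → ℕ → Prop} :
      Disjoint V₁ V₂ → ExtDCo V₁ A₁ → ExtDCo V₂ A₂ →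
      ExtDCo (V₁ ∪ V₂) (fun x y => A₁ x y ∨ A₂ x y ∨ (x ∈ V₁ ∧ y ∈ V₂))
  | dUnion {V₁ V₂ : Finset ℕ} {A₁ A₂ : ℕ → ℕ → Prop} (R : ℕ → ℕ → Prop) :
      Disjoint V₁ V₂ → ExtDCo V₁ A₁ → ExtDCo V₂ A₂ →
      ExtDCo (V₁ ∪ V₂) (fun x y => A₁ x y ∨ A₂ x y ∨ (x ∈ V₁ ∧ y ∈ V₂ ∧ R x y))

/-- Digraphs constructible from single vertices by disjoint union and adding directed twins. -/
inductive TwinBuilt : Finset ℕ → (ℕ → ℕ → Prop) → Prop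
  | single (v : ℕ) : TwinBuilt {v} (fun _ _ => False)
  | union {V₁ V₂ : Finset ℕ} {A₁ A₂ : ℕ → ℕ → Prop} :
      Disjoint V₁ V₂ → TwinBuilt V₁ A₁ → TwinBuilt V₂ A₂ →
      TwinBuilt (V₁ ∪ V₂) (fun x y => A₁ x y ∨ A₂ x y)
  | twin {V : Finset ℕ} {A : ℕ → ℕ → Prop} (v u : ℕ) (auv avu : Prop) :
      v ∈ V → u ∉ V → TwinBuilt V A →
      TwinBuilt (insert u V) (twinArc A v u auv avu)

/-- Twin-distance-hereditary digraphs: built from a single vertex by disjoint union,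
adding directed twins, and adding pendant plus / pendant minus vertices. -/
inductive TwinDH : Finset ℕ → (ℕ → ℕ → Prop) → Prop
  | single (v : ℕ) : TwinDH {v} (fun _ _ => False)
  | union {V₁ V₂ : Finset ℕ} {A₁ A₂ : ℕ → ℕ → Prop} :
      Disjoint V₁ V₂ → TwinDH V₁ A₁ → TwinDH V₂ A₂ →
      TwinDH (V₁ ∪ V₂) (fun x y => A₁ x y ∨ A₂ x y)
  | twin {V : Finset ℕ} {A : ℕ → ℕ → Prop} (v u : ℕ) (auv avu : Prop) :
      v ∈ V → u ∉ V → TwinDH V A →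
      TwinDH (insert u V) (twinArc A v u auv avu)
  | pendPlus {V : Finset ℕ} {A : ℕ → ℕ → Prop} (a u : ℕ) :
      a ∈ V → u ∉ V → TwinDH V A →
      TwinDH (insert u V) (fun x y => A x y ∨ (x = u ∧ y = a))
  | pendMinus {V : Finset ℕ} {A : ℕ → ℕ → Prop} (a u : ℕ) :
      a ∈ V → u ∉ V → TwinDH V A →
      TwinDH (insert u V) (fun x y => A x y ∨ (x = a ∧ y = u))

/-- Undirected distance-hereditary graphs, via the recursive characterization:
built from a single vertex by pendant vertices, false twins and true twins. -/
inductive UDH : Finset ℕ → (ℕ → ℕ → Prop) → Prop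
  | single (v : ℕ) : UDH {v} (fun _ _ => False)
  | pendant {V : Finset ℕ} {E : ℕ → ℕ → Prop} (a u : ℕ) :
      a ∈ V → u ∉ V → UDH V E →
      UDH (insert u V) (fun x y => E x y ∨ (x = u ∧ y = a) ∨ (x = a ∧ y = u))
  | falseTwin {V : Finset ℕ} {E : ℕ → ℕ → Prop} (v u : ℕ) :
      v ∈ V → u ∉ V → UDH V E →
      UDH (insert u V) (fun x y => E x y ∨ (x = u ∧ E v y) ∨ (y = u ∧ E x v))
  | trueTwin {V : Finset ℕ} {E : ℕ → ℕ → Prop} (v u : ℕ) :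
      v ∈ V → u ∉ V → UDH V E →
      UDH (insert u V)
        (fun x y => E x y ∨ (x = u ∧ E v y) ∨ (y = u ∧ E x v) ∨
          (x = u ∧ y = v) ∨ (x = v ∧ y = u))

/-- The induced subdigraph on `C` is strongly connected. -/
def StronglyConn (A : ℕ → ℕ → Prop) (C : Finset ℕ) : Prop :=
  ∀ u ∈ C, ∀ v ∈ C, Reach (restrict A C) u v

/-- `C` is a strong component of the digraph with vertex set `V` and arcs `A`. -/
def IsStrongComponent (A : ℕ → ℕ → Prop) (V C : Finset ℕ) : Prop :=
  C.Nonempty ∧ C ⊆ V ∧ StronglyConn A C ∧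
    ∀ D, C ⊆ D → D ⊆ V → StronglyConn A D → D = C

/-- The induced subdigraph on `S` is weakly connected. -/
def WeaklyConn (A : ℕ → ℕ → Prop) (S : Finset ℕ) : Prop :=
  S.Nonempty ∧ ∀ u ∈ S, ∀ v ∈ S,
    Relation.ReflTransGen (fun x y => restrict A S x y ∨ restrict A S y x) u v

/-- The induced subdigraph on `V` is acyclic. -/
def AcyclicOn (A : ℕ → ℕ → Prop) (V : Finset ℕ) : Prop :=
  ∀ v ∈ V, ∀ n, 0 < n → ¬ walkLen (restrict A V) n v v

/-- `CRle A V r`: the cycle rank of the digraph `(V, A)` is at most `r`.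
This is the standard recursive definition: acyclic digraphs have rank 0, digraphs
decompose into their strong components, and deleting a vertex decreases rank by
at most one. -/
inductive CRle (A : ℕ → ℕ → Prop) : Finset ℕ → ℕ → Prop
  | base {V : Finset ℕ} {r : ℕ} : AcyclicOn A V → CRle A V r
  | scc {V : Finset ℕ} {r : ℕ} :
      (∀ C, IsStrongComponent A V C → CRle A C r) → CRle A V r
  | step {V : Finset ℕ} {r : ℕ} (v : ℕ) :
      v ∈ V → CRle A (V.erase v) r → CRle A V (r + 1)

/-- The cycle rank of the digraph `(V, A)`. -/
noncomputable def cycleRank (A : ℕ → ℕ → Prop) (V : Finset ℕ) : ℕ :=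
  sInf {r | CRle A V r}

/-- `CW k V A f`: the `k`-labeled digraph with vertices `V`, arcs `A` and labeling `f`
is constructible by a directed clique-width `k`-expression. -/
inductive CW (k : ℕ) : Finset ℕ → (ℕ → ℕ → Prop) → (ℕ → Fin k) → Prop
  | vertex (v : ℕ) (a : Fin k) : CW k {v} (fun _ _ => False) (fun _ => a)
  | union {V₁ V₂ : Finset ℕ} {A₁ A₂ : ℕ → ℕ → Prop} {f₁ f₂ : ℕ → Fin k} :
      Disjoint V₁ V₂ → CW k V₁ A₁ f₁ → CW k V₂ A₂ f₂ →
      CW k (V₁ ∪ V₂) (fun x y => A₁ x y ∨ A₂ x y)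
        (fun x => if x ∈ V₁ then f₁ x else f₂ x)
  | addArcs {V : Finset ℕ} {A : ℕ → ℕ → Prop} {f : ℕ → Fin k} (a b : Fin k) :
      a ≠ b → CW k V A f →
      CW k V (fun x y => A x y ∨ (x ∈ V ∧ y ∈ V ∧ f x = a ∧ f y = b)) f
  | relabel {V : Finset ℕ} {A : ℕ → ℕ → Prop} {f : ℕ → Fin k} (a b : Fin k) :
      CW k V A f →
      CW k V A (fun x => if f x = a then b else f x)

/-!
Extended directed co-graphs are closed under the three operations that build
twin-distance-hereditary digraphs. A pendant vertex `u` attached to `a` is the directed union of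
`{u}` with the rest, the only arc between the parts being `u → a` (or `a → u`). A twin `u` of `v`
is added by induction on the co-graph expression: `u` joins the part containing `v` and the arcs
of every composition, including the relation `R` of a directed union, are pulled back along the
map sending `u` to `v`; at the leaf `v` the digraph on `{u, v}` is a series, order or disjoint
composition of two single vertices.
-/

def collapse (v u x : ℕ) : ℕ := if x = u then v else x

def cloneSet (V : Finset ℕ) (v u : ℕ) : Finset ℕ := if v ∈ V then insert u V else V

/-- The arcs of `twinArc`, written as a pullback along `collapse v u`. -/
def cloneArc (A : ℕ → ℕ → Prop) (v u : ℕ) (auv avu : Prop) : ℕ → ℕ → Prop :=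
  fun x y => A (collapse v u x) (collapse v u y) ∨ (x = u ∧ y = v ∧ auv) ∨ (x = v ∧ y = u ∧ avu)

theorem mem_cloneSet {V : Finset ℕ} {v u x : ℕ} (hu : u ∉ V) :
    x ∈ cloneSet V v u ↔ collapse v u x ∈ V := by
  unfold cloneSet collapse
  split_ifs <;> simp_all

theorem cloneSet_union (V₁ V₂ : Finset ℕ) (v u : ℕ) :
    cloneSet (V₁ ∪ V₂) v u = cloneSet V₁ v u ∪ cloneSet V₂ v u := by
  unfold cloneSet
  split_ifs <;> grind

theorem Disjoint.cloneSet {V₁ V₂ : Finset ℕ} {v u : ℕ} (hd : Disjoint V₁ V₂) (hu₁ : u ∉ V₁)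
    (hu₂ : u ∉ V₂) : Disjoint (cloneSet V₁ v u) (cloneSet V₂ v u) :=
  Finset.disjoint_left.2 fun _ hx₁ hx₂ =>
    Finset.disjoint_left.1 hd ((mem_cloneSet hu₁).1 hx₁) ((mem_cloneSet hu₂).1 hx₂)

theorem twinArc_iff_cloneArc {A : ℕ → ℕ → Prop} {V : Finset ℕ} {v u x y : ℕ} {p q : Prop}
    (hA : ∀ {x y}, A x y → x ∈ V ∧ y ∈ V ∧ x ≠ y) (hu : u ∉ V) :
    twinArc A v u p q x y ↔ cloneArc A v u p q x y := by
  simp only [twinArc, cloneArc, collapse]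
  grind

namespace ExtDCo

theorem of_iff {V W : Finset ℕ} {A B : ℕ → ℕ → Prop} (h : ExtDCo V A) (hVW : V = W)
    (hAB : ∀ x y, A x y ↔ B x y) : ExtDCo W B := by
  obtain rfl : A = B := funext₂ fun x y => propext (hAB x y)
  exact hVW ▸ h

theorem mem_mem_ne_of_arc {V : Finset ℕ} {A : ℕ → ℕ → Prop} (h : ExtDCo V A) {x y : ℕ}
    (hxy : A x y) : x ∈ V ∧ y ∈ V ∧ x ≠ y := by
  induction h generalizing x y with
  | single => exact hxy.elim
  | union hd _ _ ih₁ ih₂ | series hd _ _ ih₁ ih₂ | order hd _ _ ih₁ ih₂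
  | dUnion _ hd _ _ ih₁ ih₂ =>
    have := Finset.disjoint_left.1 hd
    grind

theorem pair {u v : ℕ} (huv : u ≠ v) (p q : Prop) :
    ExtDCo {u, v} (fun x y => (x = u ∧ y = v ∧ p) ∨ (x = v ∧ y = u ∧ q)) := by
  have hd : Disjoint ({u} : Finset ℕ) {v} := Finset.disjoint_singleton.2 huv
  have hV : {u} ∪ {v} = ({u, v} : Finset ℕ) := (Finset.insert_eq u {v}).symm
  by_cases hp : p <;> by_cases hq : q
  · exact (series hd (single u) (single v)).of_iff hV (by simp [hp, hq])
  · exact (order hd (single u) (single v)).of_iff hV (by simp [hp, hq])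
  · exact (order hd.symm (single v) (single u)).of_iff (by rw [Finset.union_comm, hV])
      (by simp [hp, hq])
  · exact (union hd (single u) (single v)).of_iff hV (by simp [hp, hq])

/-- Guarding the arcs between `u` and `v` by `v ∈ V` makes the statement hold, trivially, also when
`v ∉ V`, so the induction never has to ask which part of a composition contains `v`. -/
theorem clone {V : Finset ℕ} {A : ℕ → ℕ → Prop} (h : ExtDCo V A) {u : ℕ} (hu : u ∉ V)
    (v : ℕ) (p q : Prop) : ExtDCo (cloneSet V v u) (cloneArc A v u (v ∈ V ∧ p) (v ∈ V ∧ q)) := by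
  induction h with
  | single w =>
    by_cases hvw : v = w
    · subst hvw
      exact (pair (Finset.notMem_singleton.1 hu) p q).of_iff (by simp [_root_.cloneSet])
        (by simp [_root_.cloneArc])
    · exact (single w).of_iff (by simp [_root_.cloneSet, hvw]) (by simp [_root_.cloneArc, hvw])
  | union hd _ _ ih₁ ih₂ =>
    obtain ⟨hu₁, hu₂⟩ := Finset.notMem_union.1 hu
    refine (union (hd.cloneSet hu₁ hu₂) (ih₁ hu₁) (ih₂ hu₂)).of_iff (cloneSet_union ..).symm
      fun x y => ?_
    simp only [_root_.cloneArc, Finset.mem_union]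
    grind
  | series hd _ _ ih₁ ih₂ =>
    obtain ⟨hu₁, hu₂⟩ := Finset.notMem_union.1 hu
    refine (series (hd.cloneSet hu₁ hu₂) (ih₁ hu₁) (ih₂ hu₂)).of_iff (cloneSet_union ..).symm
      fun x y => ?_
    simp only [_root_.cloneArc, Finset.mem_union, mem_cloneSet hu₁, mem_cloneSet hu₂]
    grind
  | order hd _ _ ih₁ ih₂ =>
    obtain ⟨hu₁, hu₂⟩ := Finset.notMem_union.1 hu
    refine (order (hd.cloneSet hu₁ hu₂) (ih₁ hu₁) (ih₂ hu₂)).of_iff (cloneSet_union ..).symm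
      fun x y => ?_
    simp only [_root_.cloneArc, Finset.mem_union, mem_cloneSet hu₁, mem_cloneSet hu₂]
    grind
  | dUnion R hd _ _ ih₁ ih₂ =>
    obtain ⟨hu₁, hu₂⟩ := Finset.notMem_union.1 hu
    refine (dUnion (fun x y => R (collapse v u x) (collapse v u y)) (hd.cloneSet hu₁ hu₂)
      (ih₁ hu₁) (ih₂ hu₂)).of_iff (cloneSet_union ..).symm fun x y => ?_
    simp only [_root_.cloneArc, Finset.mem_union, mem_cloneSet hu₁, mem_cloneSet hu₂]
    grind

theorem addTwin {V : Finset ℕ} {A : ℕ → ℕ → Prop} (h : ExtDCo V A) {v u : ℕ} (hv : v ∈ V)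
    (hu : u ∉ V) (p q : Prop) : ExtDCo (insert u V) (twinArc A v u p q) :=
  (h.clone hu v p q).of_iff (if_pos hv) fun x y => by
    rw [twinArc_iff_cloneArc h.mem_mem_ne_of_arc hu]
    simp only [hv, true_and]

theorem addPendantOut {V : Finset ℕ} {A : ℕ → ℕ → Prop} (h : ExtDCo V A) {a u : ℕ} (ha : a ∈ V)
    (hu : u ∉ V) : ExtDCo (insert u V) (fun x y => A x y ∨ (x = u ∧ y = a)) :=
  (dUnion (fun _ y => y = a) (Finset.disjoint_singleton_left.2 hu) (single u) h).of_iff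
    (Finset.insert_eq u V).symm fun x y => by grind

theorem addPendantIn {V : Finset ℕ} {A : ℕ → ℕ → Prop} (h : ExtDCo V A) {a u : ℕ} (ha : a ∈ V)
    (hu : u ∉ V) : ExtDCo (insert u V) (fun x y => A x y ∨ (x = a ∧ y = u)) :=
  (dUnion (fun x _ => x = a) (Finset.disjoint_singleton_right.2 hu) h (single u)).of_iff
    (by rw [Finset.union_comm, Finset.insert_eq]) fun x y => by grind

end ExtDCo

theorem stmt_10 (V : Finset ℕ) (A : ℕ → ℕ → Prop) (h : TwinDH V A) :
    ExtDCo V A := by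
  induction h with
  | single v => exact ExtDCo.single v
  | union hd _ _ ih₁ ih₂ => exact ih₁.union hd ih₂
  | twin v u p q hv hu _ ih => exact ih.addTwin hv hu p q
  | pendPlus a u ha hu _ ih => exact ih.addPendantOut ha hu
  | pendMinus a u ha hu _ ih => exact ih.addPendantIn ha hu
end

section
/- Every twin-distance-hereditary digraph has directed clique-width at most 3. -/
/-!
Follow the construction of a twin-distance-hereditary digraph and maintain a 3-expression in
which label `2` is a sink. Adding a vertex `u` at an existing vertex `v` only requires replacing
the creation of `v` by an expression for the pair `{v, u}` that uses the two other labels and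
ends with `u` either in the label of `v` (a twin: from then on `u` receives exactly the arcs
that `v` receives) or in the sink (a pendant vertex: `u` receives no further arcs).
-/

/-- Directed 3-expressions in which label `2` is a sink: it is never the source of a relabeling
and never takes part in an arc insertion, so a vertex moved to it keeps its neighbourhood. -/
inductive SinkCW : Finset ℕ → (ℕ → ℕ → Prop) → (ℕ → Fin 3) → Prop
  | vertex (v : ℕ) (a : Fin 3) : SinkCW {v} (fun _ _ => False) (fun _ => a)
  | union {V₁ V₂ : Finset ℕ} {A₁ A₂ : ℕ → ℕ → Prop} {f₁ f₂ : ℕ → Fin 3} :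
      Disjoint V₁ V₂ → SinkCW V₁ A₁ f₁ → SinkCW V₂ A₂ f₂ →
      SinkCW (V₁ ∪ V₂) (fun x y => A₁ x y ∨ A₂ x y)
        (fun x => if x ∈ V₁ then f₁ x else f₂ x)
  | addArcs {V : Finset ℕ} {A : ℕ → ℕ → Prop} {f : ℕ → Fin 3} (a b : Fin 3) :
      a ≠ b → a ≠ 2 → b ≠ 2 → SinkCW V A f →
      SinkCW V (fun x y => A x y ∨ (x ∈ V ∧ y ∈ V ∧ f x = a ∧ f y = b)) f
  | relabel {V : Finset ℕ} {A : ℕ → ℕ → Prop} {f : ℕ → Fin 3} (a b : Fin 3) :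
      a ≠ 2 → SinkCW V A f →
      SinkCW V A (fun x => if f x = a then b else f x)

/-- Adding a vertex `u` at `v`: with `copy = true` this is `twinArc`, with `copy = false` and a
single arc it is a pendant vertex. -/
def attachArc (A : ℕ → ℕ → Prop) (v u : ℕ) (auv avu : Prop) (copy : Bool) : ℕ → ℕ → Prop :=
  fun x y => A x y ∨ (x = u ∧ y = v ∧ auv) ∨ (x = v ∧ y = u ∧ avu) ∨
    (copy ∧ ((x = u ∧ A v y) ∨ (y = u ∧ A x v)))

section attachArc

variable {A : ℕ → ℕ → Prop} {v u : ℕ} {auv avu : Prop} {copy : Bool}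

theorem attachArc_or_of_not_adj {B : ℕ → ℕ → Prop} (hout : ∀ y, ¬ B v y) (hin : ∀ x, ¬ B x v)
    (x y : ℕ) :
    attachArc (fun x y => A x y ∨ B x y) v u auv avu copy x y ↔
      attachArc A v u auv avu copy x y ∨ B x y := by
  simp only [attachArc, hout, hin, or_false]
  tauto

theorem attachArc_or_and {P Q P' Q' : ℕ → Prop} (hP : ∀ z, P' z ↔ P z ∨ z = u ∧ copy ∧ P v)
    (hQ : ∀ z, Q' z ↔ Q z ∨ z = u ∧ copy ∧ Q v) (hPu : ¬ P u) (hQu : ¬ Q u)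
    (hPQ : ¬ (P v ∧ Q v)) (x y : ℕ) :
    attachArc (fun x y => A x y ∨ P x ∧ Q y) v u auv avu copy x y ↔
      attachArc A v u auv avu copy x y ∨ P' x ∧ Q' y := by
  simp only [attachArc, hP, hQ]
  cases copy <;> grind

end attachArc

namespace SinkCW

variable {V : Finset ℕ} {A : ℕ → ℕ → Prop} {f : ℕ → Fin 3}

theorem toCW (h : SinkCW V A f) : CW 3 V A f := by
  induction h with
  | vertex v a => exact CW.vertex v a
  | union hd _ _ ih₁ ih₂ => exact CW.union hd ih₁ ih₂
  | addArcs a b hab _ _ _ ih => exact CW.addArcs a b hab ih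
  | relabel a b _ _ ih => exact CW.relabel a b ih

theorem mem_of_arc (h : SinkCW V A f) {x y : ℕ} (hxy : A x y) : x ∈ V ∧ y ∈ V := by
  induction h with
  | vertex => exact hxy.elim
  | union _ _ _ ih₁ ih₂ =>
    rcases hxy with hxy | hxy
    · exact (ih₁ hxy).imp (Finset.mem_union_left _) (Finset.mem_union_left _)
    · exact (ih₂ hxy).imp (Finset.mem_union_right _) (Finset.mem_union_right _)
  | addArcs _ _ _ _ _ _ ih => exact hxy.elim ih fun h => ⟨h.1, h.2.1⟩
  | relabel _ _ _ _ ih => exact ih hxy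

theorem congr_arcs {B : ℕ → ℕ → Prop} (h : SinkCW V A f) (hAB : ∀ x y, A x y ↔ B x y) :
    SinkCW V B f :=
  funext₂ (fun x y => propext (hAB x y)) ▸ h

theorem addArcsIf (p : Prop) (a b : Fin 3) (hab : a ≠ b) (ha : a ≠ 2) (hb : b ≠ 2)
    (h : SinkCW V A f) :
    SinkCW V (fun x y => A x y ∨ (p ∧ x ∈ V ∧ y ∈ V ∧ f x = a ∧ f y = b)) f := by
  by_cases hp : p
  · simpa only [hp, true_and] using h.addArcs a b hab ha hb
  · simpa only [hp, false_and, or_false] using h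

theorem pair {v u : ℕ} (huv : u ≠ v) (auv avu : Prop) (a : Fin 3) (copy : Bool) :
    ∃ g, SinkCW (insert u {v}) (fun x y => (x = u ∧ y = v ∧ auv) ∨ (x = v ∧ y = u ∧ avu)) g ∧
      g v = a ∧ g u = if copy then a else 2 := by
  have hd : Disjoint ({v} : Finset ℕ) {u} := Finset.disjoint_singleton.2 huv.symm
  -- relabelling `1` before `0` keeps `v` out of the sink when `a = 1`
  have h := ((((vertex v 0).union hd (vertex u 1)).addArcsIf auv 1 0 (by decide) (by decide)
    (by decide)).addArcsIf avu 0 1 (by decide) (by decide) (by decide)).relabel 1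
    (if copy then a else 2) (by decide) |>.relabel 0 a (by decide)
  rw [Finset.union_comm, ← Finset.insert_eq] at h
  refine ⟨_, h.congr_arcs fun x y => ?_, by simp, by cases copy <;> fin_cases a <;> simp [huv]⟩
  by_cases hx : x = v <;> by_cases hy : y = v <;> simp [hx, hy, huv.symm] <;> tauto

def Attaches (V : Finset ℕ) (A : ℕ → ℕ → Prop) (f : ℕ → Fin 3) (v u : ℕ) (auv avu : Prop)
    (copy : Bool) : Prop :=
  ∃ g, SinkCW (insert u V) (attachArc A v u auv avu copy) g ∧
    (∀ x ∈ V, g x = f x) ∧ g u = if copy then f v else 2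

variable {v u : ℕ} {auv avu : Prop} {copy : Bool}

theorem attaches_vertex {w u : ℕ} (hu : u ∉ ({w} : Finset ℕ)) (a : Fin 3) :
    Attaches {w} (fun _ _ => False) (fun _ => a) w u auv avu copy := by
  obtain ⟨g, hg, hgw, hgu⟩ := pair (Finset.notMem_singleton.1 hu) auv avu a copy
  exact ⟨g, hg.congr_arcs fun x y => by simp [attachArc], by simpa using hgw, hgu⟩

theorem Attaches.union_left {V₁ V₂ : Finset ℕ} {A₁ A₂ : ℕ → ℕ → Prop} {f₁ f₂ : ℕ → Fin 3}
    (hd : Disjoint V₁ V₂) (h₂ : SinkCW V₂ A₂ f₂) (hv₁ : v ∈ V₁) (hu₂ : u ∉ V₂)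
    (h₁ : Attaches V₁ A₁ f₁ v u auv avu copy) :
    Attaches (V₁ ∪ V₂) (fun x y => A₁ x y ∨ A₂ x y) (fun x => if x ∈ V₁ then f₁ x else f₂ x)
      v u auv avu copy := by
  obtain ⟨g, hg, hgV, hgu⟩ := h₁
  have hv₂ : v ∉ V₂ := Finset.disjoint_left.1 hd hv₁
  have hout : ∀ y, ¬ A₂ v y := fun y h => hv₂ (h₂.mem_of_arc h).1
  have hin : ∀ x, ¬ A₂ x v := fun x h => hv₂ (h₂.mem_of_arc h).2
  have h := hg.union (Finset.disjoint_insert_left.2 ⟨hu₂, hd⟩) h₂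
  rw [Finset.insert_union] at h
  refine ⟨_, h.congr_arcs fun x y => (attachArc_or_of_not_adj hout hin x y).symm,
    fun x hx => ?_, by simp [hgu, hv₁]⟩
  rcases Finset.mem_union.1 hx with hx | hx
  · simp [hx, hgV x hx]
  · have hxu : x ≠ u := fun h => hu₂ (h ▸ hx)
    simp [hxu, Finset.disjoint_right.1 hd hx]

theorem Attaches.union_right {V₁ V₂ : Finset ℕ} {A₁ A₂ : ℕ → ℕ → Prop} {f₁ f₂ : ℕ → Fin 3}
    (hd : Disjoint V₁ V₂) (h₁ : SinkCW V₁ A₁ f₁) (hv₂ : v ∈ V₂) (hu₁ : u ∉ V₁)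
    (h₂ : Attaches V₂ A₂ f₂ v u auv avu copy) :
    Attaches (V₁ ∪ V₂) (fun x y => A₁ x y ∨ A₂ x y) (fun x => if x ∈ V₁ then f₁ x else f₂ x)
      v u auv avu copy := by
  obtain ⟨g, hg, hgV, hgu⟩ := h₂
  have hv₁ : v ∉ V₁ := Finset.disjoint_right.1 hd hv₂
  have hout : ∀ y, ¬ A₁ v y := fun y h => hv₁ (h₁.mem_of_arc h).1
  have hin : ∀ x, ¬ A₁ x v := fun x h => hv₁ (h₁.mem_of_arc h).2
  have h := h₁.union (Finset.disjoint_insert_right.2 ⟨hu₁, hd⟩) hg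
  rw [Finset.union_insert] at h
  refine ⟨_, h.congr_arcs fun x y => ?_, fun x hx => ?_, by simp [hgu, hu₁, hv₁]⟩
  · have hcomm : (fun x y => A₁ x y ∨ A₂ x y) = fun x y => A₂ x y ∨ A₁ x y :=
      funext₂ fun _ _ => propext or_comm
    rw [hcomm, attachArc_or_of_not_adj hout hin, or_comm]
  · rcases Finset.mem_union.1 hx with hx | hx
    · simp [hx]
    · simp [Finset.disjoint_right.1 hd hx, hgV x hx]

theorem Attaches.addArcs (hv : v ∈ V) (hu : u ∉ V) {a b : Fin 3} (hab : a ≠ b)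
    (ha : a ≠ 2) (hb : b ≠ 2) (hA : Attaches V A f v u auv avu copy) :
    Attaches V (fun x y => A x y ∨ (x ∈ V ∧ y ∈ V ∧ f x = a ∧ f y = b)) f v u auv avu copy := by
  obtain ⟨g, hg, hgV, hgu⟩ := hA
  refine ⟨g, (hg.addArcs a b hab ha hb).congr_arcs fun x y => ?_, hgV, hgu⟩
  have hlabel : ∀ z c, c ≠ 2 → (z ∈ insert u V ∧ g z = c ↔
      z ∈ V ∧ f z = c ∨ z = u ∧ copy ∧ v ∈ V ∧ f v = c) := by
    intro z c hc
    by_cases hz : z = u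
    · subst hz
      cases copy <;> simp [hgu, hu, hv, hc.symm]
    · simp +contextual [hz, hgV]
  have hsplit : ∀ (P Q R S : Prop), (P ∧ Q ∧ R ∧ S ↔ (P ∧ R) ∧ (Q ∧ S)) := by tauto
  simp only [hsplit]
  exact (attachArc_or_and (hlabel · a ha) (hlabel · b hb) (by simp [hu]) (by simp [hu])
    (fun h => hab (h.1.2.symm.trans h.2.2)) x y).symm

theorem Attaches.relabel {a : Fin 3} (b : Fin 3) (ha : a ≠ 2)
    (hA : Attaches V A f v u auv avu copy) :
    Attaches V A (fun x => if f x = a then b else f x) v u auv avu copy := by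
  obtain ⟨g, hg, hgV, hgu⟩ := hA
  refine ⟨_, hg.relabel a b ha, fun x hx => by simp [hgV x hx], ?_⟩
  cases copy <;> simp [hgu, ha.symm]

theorem attaches (h : SinkCW V A f) (hv : v ∈ V) (hu : u ∉ V) (auv avu : Prop) (copy : Bool) :
    Attaches V A f v u auv avu copy := by
  induction h with
  | vertex w a => exact Finset.mem_singleton.1 hv ▸ attaches_vertex hu a
  | union hd h₁ h₂ ih₁ ih₂ =>
    rcases Finset.mem_union.1 hv with hv₁ | hv₂
    · exact (ih₁ hv₁ fun h => hu (Finset.mem_union_left _ h)).union_left hd h₂ hv₁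
        fun h => hu (Finset.mem_union_right _ h)
    · exact (ih₂ hv₂ fun h => hu (Finset.mem_union_right _ h)).union_right hd h₁ hv₂
        fun h => hu (Finset.mem_union_left _ h)
  | addArcs a b hab ha hb _ ih => exact (ih hv hu).addArcs hv hu hab ha hb
  | relabel a b ha _ ih => exact (ih hv hu).relabel b ha

end SinkCW

theorem TwinDH.exists_sinkCW {V : Finset ℕ} {A : ℕ → ℕ → Prop} (h : TwinDH V A) :
    ∃ f, SinkCW V A f := by
  induction h with
  | single v => exact ⟨_, .vertex v 0⟩
  | union hd _ _ ih₁ ih₂ =>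
    obtain ⟨f₁, h₁⟩ := ih₁
    obtain ⟨f₂, h₂⟩ := ih₂
    exact ⟨_, h₁.union hd h₂⟩
  | twin v u auv avu hv hu _ ih =>
    obtain ⟨f, hf⟩ := ih
    obtain ⟨g, hg, -⟩ := hf.attaches hv hu auv avu true
    exact ⟨g, hg.congr_arcs fun x y => by simp [attachArc, twinArc]⟩
  | pendPlus a u ha hu _ ih =>
    obtain ⟨f, hf⟩ := ih
    obtain ⟨g, hg, -⟩ := hf.attaches ha hu True False false
    exact ⟨g, hg.congr_arcs fun x y => by simp [attachArc]⟩
  | pendMinus a u ha hu _ ih =>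
    obtain ⟨f, hf⟩ := ih
    obtain ⟨g, hg, -⟩ := hf.attaches ha hu False True false
    exact ⟨g, hg.congr_arcs fun x y => by simp [attachArc]⟩

theorem stmt_12 (V : Finset ℕ) (A : ℕ → ℕ → Prop) (h : TwinDH V A) :
    ∃ f : ℕ → Fin 3, CW 3 V A f := by
  obtain ⟨f, hf⟩ := h.exists_sinkCW
  exact ⟨f, hf.toCW⟩
end

section
/- The directed path on three vertices (vertices a, b, c with arcs (a,b) and (b,c) only) has directed clique-width exactly 3; in particular it cannot be constructed with a directed clique-width 2-expression. -/
def IsInducedDiPath3 (A : ℕ → ℕ → Prop) (x y z : ℕ) : Prop :=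
  A x y ∧ A y z ∧ ¬ A y x ∧ ¬ A z y ∧ ¬ A x z ∧ ¬ A z x

theorem IsInducedDiPath3.of_le {A B : ℕ → ℕ → Prop} {x y z : ℕ}
    (h : IsInducedDiPath3 B x y z) (hAB : ∀ u v, A u v → B u v) (hxy : A x y) (hyz : A y z) :
    IsInducedDiPath3 A x y z :=
  ⟨hxy, hyz, fun h' => h.2.2.1 (hAB _ _ h'), fun h' => h.2.2.2.1 (hAB _ _ h'),
    fun h' => h.2.2.2.2.1 (hAB _ _ h'), fun h' => h.2.2.2.2.2 (hAB _ _ h')⟩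

theorem Fin.eq_or_eq_of_ne_of_le_two {k : ℕ} (hk : k ≤ 2) {a b : Fin k} (hab : a ≠ b)
    (c : Fin k) : c = a ∨ c = b := by
  rw [Ne, Fin.ext_iff] at hab
  rw [Fin.ext_iff, Fin.ext_iff]
  omega

namespace CW

variable {k : ℕ} {V : Finset ℕ} {A : ℕ → ℕ → Prop} {f : ℕ → Fin k}

theorem mem_of_arc (h : CW k V A f) {x y : ℕ} (hxy : A x y) : x ∈ V ∧ y ∈ V := by
  induction h with
  | vertex => exact hxy.elim
  | union _ _ _ ih₁ ih₂ =>
    rcases hxy with hxy | hxy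
    · exact (ih₁ hxy).imp (Finset.mem_union_left _) (Finset.mem_union_left _)
    · exact (ih₂ hxy).imp (Finset.mem_union_right _) (Finset.mem_union_right _)
  | addArcs _ _ _ _ ih => exact hxy.elim ih fun h => ⟨h.1, h.2.1⟩
  | relabel _ _ _ ih => exact ih hxy

theorem of_eq_of_iff {V' : Finset ℕ} {A' : ℕ → ℕ → Prop} (h : CW k V A f) (hV : V = V')
    (hA : ∀ x y, A x y ↔ A' x y) : CW k V' A' f := by
  obtain rfl : A = A' := funext₂ fun x y => propext (hA x y)
  exact hV ▸ h

/-- With two labels, adding all arcs from label `a` to label `b` cannot complete an induced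
directed `P₃`: the third vertex carries `a` or `b` and so would receive an extra arc. -/
theorem not_isInducedDiPath3 (hk : k ≤ 2) (h : CW k V A f) {x y z : ℕ} :
    ¬ IsInducedDiPath3 A x y z := by
  induction h generalizing x y z with
  | vertex => exact fun hP => hP.1
  | union hd h₁ h₂ ih₁ ih₂ =>
    rintro hP
    rcases hP.1 with hxy | hxy <;> rcases hP.2.1 with hyz | hyz
    · exact ih₁ (hP.of_le (fun _ _ => Or.inl) hxy hyz)
    · exact Finset.disjoint_left.mp hd (h₁.mem_of_arc hxy).2 (h₂.mem_of_arc hyz).1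
    · exact Finset.disjoint_right.mp hd (h₂.mem_of_arc hxy).2 (h₁.mem_of_arc hyz).1
    · exact ih₂ (hP.of_le (fun _ _ => Or.inr) hxy hyz)
  | @addArcs V A f a b hab h ih =>
    rintro hP
    obtain ⟨hxV, hyV⟩ := hP.1.elim h.mem_of_arc fun h => ⟨h.1, h.2.1⟩
    obtain ⟨-, hzV⟩ := hP.2.1.elim h.mem_of_arc fun h => ⟨h.1, h.2.1⟩
    have hxy : A x y := by
      refine hP.1.resolve_right fun ⟨_, _, hx, hy⟩ => ?_
      rcases Fin.eq_or_eq_of_ne_of_le_two hk hab (f z) with hz | hz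
      · exact hP.2.2.2.1 (Or.inr ⟨hzV, hyV, hz, hy⟩)
      · exact hP.2.2.2.2.1 (Or.inr ⟨hxV, hzV, hx, hz⟩)
    have hyz : A y z := by
      refine hP.2.1.resolve_right fun ⟨_, _, hy, hz⟩ => ?_
      rcases Fin.eq_or_eq_of_ne_of_le_two hk hab (f x) with hx | hx
      · exact hP.2.2.2.2.1 (Or.inr ⟨hxV, hzV, hx, hz⟩)
      · exact hP.2.2.1 (Or.inr ⟨hyV, hxV, hy, hx⟩)
    exact ih (hP.of_le (fun _ _ => Or.inl) hxy hyz)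
  | relabel _ _ _ ih => exact ih

end CW

theorem stmt_13 :
    (∃ f : ℕ → Fin 3, CW 3 ({0, 1, 2} : Finset ℕ)
        (fun x y => (x = 0 ∧ y = 1) ∨ (x = 1 ∧ y = 2)) f) ∧
    ∀ k : ℕ, (∃ f : ℕ → Fin k, CW k ({0, 1, 2} : Finset ℕ)
        (fun x y => (x = 0 ∧ y = 1) ∨ (x = 1 ∧ y = 2)) f) → 3 ≤ k := by
  constructor
  · have h := ((((CW.vertex 0 0).union (by decide) (CW.vertex 1 1)).addArcs 0 1
      (by decide)).union (by decide) (CW.vertex 2 (2 : Fin 3))).addArcs 1 2 (by decide)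
    refine ⟨_, h.of_eq_of_iff (by decide) fun x y => ?_⟩
    simp only [Finset.mem_union, Finset.mem_singleton]
    split_ifs <;> simp_all
  · rintro k ⟨f, h⟩
    by_contra! hk
    exact CW.not_isInducedDiPath3 (by omega) h (x := 0) (y := 1) (z := 2)
      (by simp [IsInducedDiPath3])
end

section
/- Every directed co-graph has directed clique-width at most 2. -/
/-!
Two labels suffice because any labeled digraph can be relabeled to a single label. To build a
composition, relabel the first part entirely to label 0 and the second to label 1, take the
disjoint union, and add the arcs from label 0 to label 1 (for series composition, also those
from 1 to 0).
-/

namespace CW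

variable {k : ℕ} {V : Finset ℕ} {A : ℕ → ℕ → Prop} {f : ℕ → Fin k}

theorem of_arc_iff {A' : ℕ → ℕ → Prop} (hA : ∀ x y, A x y ↔ A' x y) (h : CW k V A f) :
    CW k V A' f := by
  have : A = A' := funext₂ fun x y => propext (hA x y)
  exact this ▸ h

theorem relabel_mem (a : Fin k) (S : Finset (Fin k)) (h : CW k V A f) :
    CW k V A (fun x => if f x ∈ S then a else f x) := by
  induction S using Finset.induction_on with
  | empty => simpa using h
  | insert b S _ ih =>
    convert ih.relabel b a using 1
    funext x
    split_ifs <;> simp_all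

theorem relabel_const (a : Fin k) (h : CW k V A f) : CW k V A (fun _ => a) := by
  simpa using relabel_mem a Finset.univ h

variable {V₁ V₂ : Finset ℕ} {A₁ A₂ : ℕ → ℕ → Prop} {f₁ f₂ : ℕ → Fin 2}

theorem union_sides (hd : Disjoint V₁ V₂) (h₁ : CW 2 V₁ A₁ f₁) (h₂ : CW 2 V₂ A₂ f₂) :
    CW 2 (V₁ ∪ V₂) (fun x y => A₁ x y ∨ A₂ x y) (fun x => if x ∈ V₁ then 0 else 1) :=
  union hd (relabel_const 0 h₁) (relabel_const 1 h₂)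

theorem union_sides_arc_iff (hd : Disjoint V₁ V₂) (x y : ℕ) :
    (x ∈ V₁ ∪ V₂ ∧ y ∈ V₁ ∪ V₂ ∧
        (if x ∈ V₁ then 0 else 1 : Fin 2) = 0 ∧ (if y ∈ V₁ then 0 else 1 : Fin 2) = 1 ↔
      x ∈ V₁ ∧ y ∈ V₂) ∧
    (x ∈ V₁ ∪ V₂ ∧ y ∈ V₁ ∪ V₂ ∧
        (if x ∈ V₁ then 0 else 1 : Fin 2) = 1 ∧ (if y ∈ V₁ then 0 else 1 : Fin 2) = 0 ↔
      x ∈ V₂ ∧ y ∈ V₁) := by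
  have hV₂ {z : ℕ} : z ∈ V₁ → z ∉ V₂ := fun hz => Finset.disjoint_left.mp hd hz
  by_cases hx : x ∈ V₁ <;> by_cases hy : y ∈ V₁ <;> simp [hx, hy, hV₂]

theorem order_comp (hd : Disjoint V₁ V₂) (h₁ : CW 2 V₁ A₁ f₁) (h₂ : CW 2 V₂ A₂ f₂) :
    ∃ f, CW 2 (V₁ ∪ V₂) (fun x y => A₁ x y ∨ A₂ x y ∨ (x ∈ V₁ ∧ y ∈ V₂)) f := by
  refine ⟨_, of_arc_iff (fun x y => ?_) ((union_sides hd h₁ h₂).addArcs 0 1 (by decide))⟩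
  rw [(union_sides_arc_iff hd x y).1, or_assoc]

theorem series_comp (hd : Disjoint V₁ V₂) (h₁ : CW 2 V₁ A₁ f₁) (h₂ : CW 2 V₂ A₂ f₂) :
    ∃ f, CW 2 (V₁ ∪ V₂)
      (fun x y => A₁ x y ∨ A₂ x y ∨ (x ∈ V₁ ∧ y ∈ V₂) ∨ (x ∈ V₂ ∧ y ∈ V₁)) f := by
  refine ⟨_, of_arc_iff (fun x y => ?_)
    (((union_sides hd h₁ h₂).addArcs 0 1 (by decide)).addArcs 1 0 (by decide))⟩
  rw [(union_sides_arc_iff hd x y).1, (union_sides_arc_iff hd x y).2]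
  simp only [or_assoc]

end CW

theorem stmt_14 (V : Finset ℕ) (A : ℕ → ℕ → Prop) (h : DCo V A) :
    ∃ f : ℕ → Fin 2, CW 2 V A f := by
  induction h with
  | single v => exact ⟨_, CW.vertex v 0⟩
  | union hd _ _ ih₁ ih₂ =>
    obtain ⟨_, h₁⟩ := ih₁
    obtain ⟨_, h₂⟩ := ih₂
    exact ⟨_, CW.union hd h₁ h₂⟩
  | series hd _ _ ih₁ ih₂ =>
    obtain ⟨_, h₁⟩ := ih₁
    obtain ⟨_, h₂⟩ := ih₂
    exact CW.series_comp hd h₁ h₂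
  | order hd _ _ ih₁ ih₂ =>
    obtain ⟨_, h₁⟩ := ih₁
    obtain ⟨_, h₂⟩ := ih₂
    exact CW.order_comp hd h₁ h₂
end

section
/- An undirected graph that can be constructed from a single vertex by repeatedly adding pendant vertices, false twins, and true twins contains no induced cycle of length at least 5. -/
/-! Induct on the construction. The vertex `u` added last is either pendant, so it has a single
neighbour and lies on no cycle, or a twin of an older vertex `v`. Two twins cannot both lie on an
induced cycle of length at least 5, since their neighbours on the cycle would coincide; so a cycle
through `u` misses `v`, and replacing `u` by `v` yields an induced cycle of the same length in the
smaller graph. -/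

variable {α : Type*}

def IsInducedCycle (E : α → α → Prop) {n : ℕ} (d : ZMod n → α) : Prop :=
  Function.Injective d ∧ ∀ a b, E (d a) (d b) ↔ b = a + 1 ∨ a = b + 1

def AreTwins (E : α → α → Prop) (u v : α) : Prop :=
  ∀ y, y ≠ u → y ≠ v → (E u y ↔ E v y) ∧ (E y u ↔ E y v)

lemma ZMod.natCast_ne_zero_of_lt {n k : ℕ} (hk : 0 < k) (hkn : k < n) : (k : ZMod n) ≠ 0 := by
  rw [Ne, ZMod.natCast_eq_zero_iff]
  exact Nat.not_dvd_of_pos_of_lt hk hkn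

lemma isInducedCycle_comp_val {E : α → α → Prop} {n : ℕ} [NeZero n] {c : ℕ → α}
    (hinj : ∀ i < n, ∀ j < n, c i = c j → i = j)
    (hcyc : ∀ i < n, ∀ j < n, (E (c i) (c j) ↔ (j = (i + 1) % n ∨ i = (j + 1) % n))) :
    IsInducedCycle E fun k : ZMod n => c k.val := by
  have val_eq_succ : ∀ a b : ZMod n, b.val = (a.val + 1) % n ↔ b = a + 1 := fun a b => by
    rw [← ZMod.val_injective n |>.eq_iff, ← ZMod.val_natCast, Nat.cast_add,
      ZMod.natCast_zmod_val, Nat.cast_one]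
  refine ⟨fun a b hab => ZMod.val_injective n (hinj _ a.val_lt _ b.val_lt hab), fun a b => ?_⟩
  rw [hcyc _ a.val_lt _ b.val_lt, val_eq_succ, val_eq_succ]

namespace IsInducedCycle

variable {E F : α → α → Prop} {n : ℕ} {d : ZMod n → α}

lemma adj_add_one (hd : IsInducedCycle E d) (a : ZMod n) : E (d a) (d (a + 1)) :=
  (hd.2 _ _).2 (Or.inl rfl)

lemma adj_sub_one (hd : IsInducedCycle E d) (a : ZMod n) : E (d a) (d (a - 1)) :=
  (hd.2 _ _).2 (Or.inr (sub_add_cancel a 1).symm)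

lemma of_forall_ne {u : α} (hd : IsInducedCycle E d) (hu : ∀ k, d k ≠ u)
    (hEF : ∀ x y, x ≠ u → y ≠ u → (E x y ↔ F x y)) : IsInducedCycle F d :=
  ⟨hd.1, fun a b => (hEF _ _ (hu a) (hu b)).symm.trans (hd.2 a b)⟩

lemma ne_of_forall_adj_eq {u a : α} (hd : IsInducedCycle E d) (hn : 3 ≤ n)
    (hu : ∀ y, E u y → y = a) (k : ZMod n) : d k ≠ u := by
  rintro rfl
  have h : k + 1 = k - 1 :=
    hd.1 ((hu _ (hd.adj_add_one k)).trans (hu _ (hd.adj_sub_one k)).symm)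
  have h2 : ((2 : ℕ) : ZMod n) ≠ 0 := ZMod.natCast_ne_zero_of_lt two_pos (by omega)
  exact h2 (by push_cast; linear_combination h)

lemma not_areTwins (hd : IsInducedCycle E d) (hn : 5 ≤ n) {i j : ZMod n} (hij : i ≠ j) :
    ¬ AreTwins E (d i) (d j) := by
  intro htw
  have hk : ∀ k : ℕ, 0 < k → k < 5 → (k : ZMod n) ≠ 0 := fun k hk hk5 =>
    ZMod.natCast_ne_zero_of_lt hk (by omega)
  have h1 : (1 : ZMod n) ≠ 0 := by simpa using hk 1 (by norm_num) (by norm_num)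
  have h2 : (2 : ZMod n) ≠ 0 := by simpa using hk 2 (by norm_num) (by norm_num)
  have h3 : (3 : ZMod n) ≠ 0 := by simpa using hk 3 (by norm_num) (by norm_num)
  have h4 : (4 : ZMod n) ≠ 0 := by simpa using hk 4 (by norm_num) (by norm_num)
  -- A common neighbour of `i` and `j` on the cycle is `j ± 1`; applied to `i ± 1` this
  -- puts `j` in `{i ± 1, i ± 2}`, and each choice makes `1, 2, 3` or `4` vanish in `ZMod n`.
  have common : ∀ m, m ≠ i → m ≠ j → (m = i + 1 ∨ i = m + 1) → (m = j + 1 ∨ j = m + 1) :=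
    fun m hmi hmj hm =>
      (hd.2 j m).1 ((htw (d m) (hd.1.ne hmi) (hd.1.ne hmj)).1.1 ((hd.2 i m).2 hm))
  have succ_ne : i + 1 ≠ i := fun h => h1 (by linear_combination h)
  have pred_ne : i - 1 ≠ i := fun h => h1 (by linear_combination -h)
  rcases eq_or_ne j (i + 1) with rfl | hj₁
  · rcases common (i - 1) pred_ne (fun h => h2 (by linear_combination -h)) (Or.inr (by ring))
      with h | h
    · exact h3 (by linear_combination -h)
    · exact h1 (by linear_combination h)
  rcases eq_or_ne j (i - 1) with rfl | hj₂
  · rcases common (i + 1) succ_ne (fun h => h2 (by linear_combination h)) (Or.inl rfl)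
      with h | h
    · exact h1 (by linear_combination h)
    · exact h3 (by linear_combination -h)
  rcases common (i + 1) succ_ne (Ne.symm hj₁) (Or.inl rfl) with h | h
  · exact hij (by linear_combination h)
  rcases common (i - 1) pred_ne (Ne.symm hj₂) (Or.inr (by ring)) with h' | h'
  · exact h4 (by linear_combination -h - h')
  · exact hij (by linear_combination -h')

lemma update_of_areTwins (hd : IsInducedCycle E d) (hloop : ∀ x, ¬ E x x) {i : ZMod n} {v : α}
    (hv : ∀ k, d k ≠ v) (htw : AreTwins E (d i) v) :
    IsInducedCycle E (Function.update d i v) := by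
  constructor
  · intro a b hab
    rcases eq_or_ne a i with ha | ha <;> rcases eq_or_ne b i with hb | hb
    · exact ha.trans hb.symm
    · rw [ha, Function.update_self, Function.update_of_ne hb] at hab
      exact absurd hab.symm (hv b)
    · rw [hb, Function.update_self, Function.update_of_ne ha] at hab
      exact absurd hab (hv a)
    · rw [Function.update_of_ne ha, Function.update_of_ne hb] at hab
      exact hd.1 hab
  · intro a b
    rcases eq_or_ne a i with ha | ha <;> rcases eq_or_ne b i with hb | hb
    · subst ha hb
      simp only [Function.update_self]
      exact iff_of_false (hloop v) fun h => hloop _ ((hd.2 _ _).2 h)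
    · subst ha
      simp only [Function.update_self, Function.update_of_ne hb]
      exact (htw (d b) (hd.1.ne hb) (hv b)).1.symm.trans (hd.2 _ _)
    · subst hb
      simp only [Function.update_self, Function.update_of_ne ha]
      exact (htw (d a) (hd.1.ne ha) (hv a)).2.symm.trans (hd.2 _ _)
    · simp only [Function.update_of_ne ha, Function.update_of_ne hb]
      exact hd.2 a b

end IsInducedCycle

section Steps

variable {E F : α → α → Prop} {n : ℕ}

lemma not_isInducedCycle_of_pendant (hn : 3 ≤ n) (hF : ∀ d : ZMod n → α, ¬ IsInducedCycle F d)
    {u a : α} (hu : ∀ y, E u y → y = a) (hEF : ∀ x y, x ≠ u → y ≠ u → (E x y ↔ F x y))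
    (d : ZMod n → α) : ¬ IsInducedCycle E d :=
  fun hd => hF d (hd.of_forall_ne (hd.ne_of_forall_adj_eq hn hu) hEF)

/-- A cycle through `u` but not through its twin `v` can be rerouted through `v`. -/
lemma not_isInducedCycle_of_areTwins (hn : 5 ≤ n) (hF : ∀ d : ZMod n → α, ¬ IsInducedCycle F d)
    (hloop : ∀ x, ¬ E x x) {u v : α} (huv : u ≠ v) (htw : AreTwins E u v)
    (hEF : ∀ x y, x ≠ u → y ≠ u → (E x y ↔ F x y)) (d : ZMod n → α) :
    ¬ IsInducedCycle E d := by
  intro hd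
  by_cases hu : ∃ i, d i = u
  · obtain ⟨i, rfl⟩ := hu
    by_cases hv : ∃ j, d j = v
    · obtain ⟨j, rfl⟩ := hv
      exact hd.not_areTwins hn (fun h => huv (congrArg d h)) htw
    · push Not at hv
      refine hF _ ((hd.update_of_areTwins hloop hv htw).of_forall_ne (fun k => ?_) hEF)
      rcases eq_or_ne k i with rfl | hk
      · simpa using huv.symm
      · simpa [Function.update_of_ne hk] using hd.1.ne hk
  · push Not at hu
    exact hF _ (hd.of_forall_ne hu hEF)

end Steps

namespace UDH

variable {V : Finset ℕ} {E : ℕ → ℕ → Prop}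

lemma mem_of_adj (h : UDH V E) {x y : ℕ} (hxy : E x y) : x ∈ V ∧ y ∈ V := by
  induction h generalizing x y with
  | single v => exact hxy.elim
  | pendant a u ha hu hs ih =>
    rcases hxy with h | ⟨rfl, rfl⟩ | ⟨rfl, rfl⟩
    · exact (ih h).imp Finset.mem_insert_of_mem Finset.mem_insert_of_mem
    · exact ⟨Finset.mem_insert_self _ _, Finset.mem_insert_of_mem ha⟩
    · exact ⟨Finset.mem_insert_of_mem ha, Finset.mem_insert_self _ _⟩
  | falseTwin v u hv hu hs ih =>
    rcases hxy with h | ⟨rfl, h⟩ | ⟨rfl, h⟩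
    · exact (ih h).imp Finset.mem_insert_of_mem Finset.mem_insert_of_mem
    · exact ⟨Finset.mem_insert_self _ _, Finset.mem_insert_of_mem (ih h).2⟩
    · exact ⟨Finset.mem_insert_of_mem (ih h).1, Finset.mem_insert_self _ _⟩
  | trueTwin v u hv hu hs ih =>
    rcases hxy with h | ⟨rfl, h⟩ | ⟨rfl, h⟩ | ⟨rfl, rfl⟩ | ⟨rfl, rfl⟩
    · exact (ih h).imp Finset.mem_insert_of_mem Finset.mem_insert_of_mem
    · exact ⟨Finset.mem_insert_self _ _, Finset.mem_insert_of_mem (ih h).2⟩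
    · exact ⟨Finset.mem_insert_of_mem (ih h).1, Finset.mem_insert_self _ _⟩
    · exact ⟨Finset.mem_insert_self _ _, Finset.mem_insert_of_mem hv⟩
    · exact ⟨Finset.mem_insert_of_mem hv, Finset.mem_insert_self _ _⟩

lemma not_adj_left (h : UDH V E) {u : ℕ} (hu : u ∉ V) (y : ℕ) : ¬ E u y :=
  fun huy => hu (h.mem_of_adj huy).1

lemma not_adj_right (h : UDH V E) {u : ℕ} (hu : u ∉ V) (x : ℕ) : ¬ E x u :=
  fun hxu => hu (h.mem_of_adj hxu).2

lemma irrefl (h : UDH V E) (x : ℕ) : ¬ E x x := by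
  induction h with
  | single v => exact id
  | pendant a u ha hu hs ih =>
    rintro (h | ⟨rfl, rfl⟩ | ⟨rfl, rfl⟩)
    exacts [ih h, hu ha, hu ha]
  | falseTwin v u hv hu hs ih =>
    rintro (h | ⟨rfl, h⟩ | ⟨rfl, h⟩)
    exacts [ih h, hs.not_adj_right hu _ h, hs.not_adj_left hu _ h]
  | trueTwin v u hv hu hs ih =>
    rintro (h | ⟨rfl, h⟩ | ⟨rfl, h⟩ | ⟨rfl, rfl⟩ | ⟨rfl, rfl⟩)
    exacts [ih h, hs.not_adj_right hu _ h, hs.not_adj_left hu _ h, hu hv, hu hv]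

theorem not_isInducedCycle (h : UDH V E) {n : ℕ} (hn : 5 ≤ n) :
    ∀ d : ZMod n → ℕ, ¬ IsInducedCycle E d := by
  induction h with
  | single v => exact fun d hd => hd.adj_add_one 0
  | pendant a u ha hu hs ih =>
    refine not_isInducedCycle_of_pendant (by omega) ih (u := u) (a := a) ?_ ?_
    · rintro y (h | ⟨-, rfl⟩ | ⟨rfl, -⟩)
      · exact absurd h (hs.not_adj_left hu y)
      · rfl
      · exact absurd ha hu
    · intro x y hx hy
      simp [hx, hy]
  | falseTwin v u hv hu hs ih =>
    have huv : u ≠ v := fun h => hu (h ▸ hv)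
    refine not_isInducedCycle_of_areTwins hn ih (falseTwin v u hv hu hs).irrefl huv ?_ ?_
    · intro y hyu _
      simp [hyu, hs.not_adj_left hu, hs.not_adj_right hu]
    · intro x y hx hy
      simp [hx, hy]
  | trueTwin v u hv hu hs ih =>
    have huv : u ≠ v := fun h => hu (h ▸ hv)
    refine not_isInducedCycle_of_areTwins hn ih (trueTwin v u hv hu hs).irrefl huv ?_ ?_
    · intro y hyu hyv
      simp [hyu, hyv, huv, hs.not_adj_left hu, hs.not_adj_right hu]
    · intro x y hx hy
      simp [hx, hy]

end UDH

theorem stmt_15_general (V : Finset ℕ) (E : ℕ → ℕ → Prop) (h : UDH V E)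
    (n : ℕ) (hn : 5 ≤ n) (c : ℕ → ℕ)
    (hinj : ∀ i < n, ∀ j < n, c i = c j → i = j) :
    ¬ ∀ i < n, ∀ j < n, (E (c i) (c j) ↔ (j = (i + 1) % n ∨ i = (j + 1) % n)) := by
  intro hcyc
  have : NeZero n := ⟨by omega⟩
  exact h.not_isInducedCycle hn _ (isInducedCycle_comp_val hinj hcyc)

theorem stmt_15 (V : Finset ℕ) (E : ℕ → ℕ → Prop) (h : UDH V E)
    (n : ℕ) (hn : 5 ≤ n) (c : ℕ → ℕ)
    (hinj : ∀ i < n, ∀ j < n, c i = c j → i = j)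
    (hmem : ∀ i < n, c i ∈ V) :
    ¬ ∀ i < n, ∀ j < n, (E (c i) (c j) ↔ (j = (i + 1) % n ∨ i = (j + 1) % n)) :=
  stmt_15_general V E h n hn c hinj
end

section
/- If a digraph G can be constructed from a single vertex using only disjoint unions and directed twin operations (no pendant vertex operations), and G is strongly connected with at least two vertices, then for any two vertices u, v of G, the directed distance from u to v is at most 2. -/
/-!
Call a digraph *short* if every nonempty walk from `x` to `y` can be replaced by a walk of
length one or two. Disjoint unions of short digraphs are short, since a walk never leaves the
part it starts in. Now add `u` as a twin of `v` and collapse `u` onto `v`. Every arc then maps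
to an arc of the old digraph, except the arcs between `u` and `v`, which collapse to a point.
So a walk either projects to a nonempty walk of the old digraph, which is short by induction and
lifts back because `u` has the neighbours of `v`, or it uses only arcs between `u` and `v`, and
then it is short anyway. In a strongly connected digraph every vertex reaches every other, so
all distances are at most two.
-/

open Relation

namespace Relation

variable {α β : Type*} {r q r₁ r₂ : α → α → Prop} {p : β → β → Prop} {x y : α}

theorem TransGen.lift_or_of_collapse (f : α → β) (hq : ∀ a b, q a b → f a = f b)
    (h : ∀ a b, r a b → p (f a) (f b) ∨ q a b) (hxy : TransGen r x y) :
    TransGen p (f x) (f y) ∨ TransGen q x y := by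
  have collapse : ∀ {a b}, TransGen q a b → f a = f b := fun {_ b} hab =>
    (hab.lift f hq).closed' (P := (· = f b)) (fun h hb => h.trans hb) rfl
  induction hxy with
  | single hab => exact (h _ _ hab).imp .single .single
  | tail _ hbc ih =>
    rcases ih, h _ _ hbc with ⟨ih | ih, hbc | hbc⟩
    · exact .inl (ih.tail hbc)
    · exact .inl (hq _ _ hbc ▸ ih)
    · exact .inl (collapse ih ▸ .single hbc)
    · exact .inr (ih.tail hbc)

theorem TransGen.or_of_disjoint {s₁ s₂ : Set α} (h₁ : ∀ a b, r₁ a b → a ∈ s₁ ∧ b ∈ s₁)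
    (h₂ : ∀ a b, r₂ a b → a ∈ s₂ ∧ b ∈ s₂) (hd : Disjoint s₁ s₂)
    (h : TransGen (fun a b => r₁ a b ∨ r₂ a b) x y) : TransGen r₁ x y ∨ TransGen r₂ x y := by
  induction h using TransGen.head_induction_on with
  | single hab => exact hab.imp .single .single
  | head hab _ ih =>
    rcases hab, ih with ⟨hab | hab, ih | ih⟩
    · exact .inl (ih.head hab)
    · obtain ⟨_, hb, -⟩ := TransGen.head'_iff.mp ih
      exact absurd (h₂ _ _ hb).1 (Set.disjoint_left.mp hd (h₁ _ _ hab).2)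
    · obtain ⟨_, hb, -⟩ := TransGen.head'_iff.mp ih
      exact absurd (h₁ _ _ hb).1 (Set.disjoint_right.mp hd (h₂ _ _ hab).2)
    · exact .inr (ih.head hab)

end Relation

section OneOrTwoSteps

variable {α : Type*} {r s : α → α → Prop} {x y : α}

def OneOrTwoSteps (r : α → α → Prop) (x y : α) : Prop :=
  r x y ∨ ∃ w, r x w ∧ r w y

theorem OneOrTwoSteps.mono (hrs : r ≤ s) : OneOrTwoSteps r x y → OneOrTwoSteps s x y :=
  Or.imp (hrs _ _) fun ⟨w, hxw, hwy⟩ => ⟨w, hrs _ _ hxw, hrs _ _ hwy⟩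

end OneOrTwoSteps

def twinProj (v u x : ℕ) : ℕ := if x = u then v else x

def twinLink (v u : ℕ) (auv avu : Prop) (x y : ℕ) : Prop :=
  (x = u ∧ y = v ∧ auv) ∨ (x = v ∧ y = u ∧ avu)

section Twin

variable {A : ℕ → ℕ → Prop} {v u : ℕ} {auv avu : Prop} {x y : ℕ}

@[simp] lemma twinProj_self : twinProj v u u = v := if_pos rfl

lemma twinProj_of_ne (hx : x ≠ u) : twinProj v u x = x := if_neg hx

lemma twinArc_of_twinLink (h : twinLink v u auv avu x y) : twinArc A v u auv avu x y :=
  h.elim (Or.inr ∘ Or.inl) (Or.inr ∘ Or.inr ∘ Or.inl)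

lemma twinArc_of_twinProj_left (h : A (twinProj v u x) y) : twinArc A v u auv avu x y := by
  by_cases hx : x = u
  · exact Or.inr (Or.inr (Or.inr (Or.inl ⟨hx, by rwa [hx, twinProj_self] at h⟩)))
  · exact Or.inl (twinProj_of_ne hx ▸ h)

lemma twinArc_of_twinProj_right (h : A x (twinProj v u y)) : twinArc A v u auv avu x y := by
  by_cases hy : y = u
  · exact Or.inr (Or.inr (Or.inr (Or.inr ⟨hy, by rwa [hy, twinProj_self] at h⟩)))
  · exact Or.inl (twinProj_of_ne hy ▸ h)

lemma twinProj_eq_of_twinLink (hvu : v ≠ u) (h : twinLink v u auv avu x y) :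
    twinProj v u x = twinProj v u y := by
  rcases h with ⟨rfl, rfl, -⟩ | ⟨rfl, rfl, -⟩ <;> simp [twinProj_of_ne hvu]

lemma twinProj_or_twinLink_of_twinArc (hA : ∀ a b, A a b → a ≠ u ∧ b ≠ u)
    (h : twinArc A v u auv avu x y) :
    A (twinProj v u x) (twinProj v u y) ∨ twinLink v u auv avu x y := by
  rcases h with h | h | h | ⟨rfl, h⟩ | ⟨rfl, h⟩
  · exact .inl (by rwa [twinProj_of_ne (hA _ _ h).1, twinProj_of_ne (hA _ _ h).2])
  · exact .inr (.inl h)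
  · exact .inr (.inr h)
  · exact .inl (by rwa [twinProj_self, twinProj_of_ne (hA _ _ h).2])
  · exact .inl (by rwa [twinProj_self, twinProj_of_ne (hA _ _ h).1])

lemma transGen_twinProj_or_twinLink (hvu : v ≠ u) (hA : ∀ a b, A a b → a ≠ u ∧ b ≠ u)
    (h : TransGen (twinArc A v u auv avu) x y) :
    TransGen A (twinProj v u x) (twinProj v u y) ∨ TransGen (twinLink v u auv avu) x y :=
  h.lift_or_of_collapse _ (fun _ _ => twinProj_eq_of_twinLink hvu)
    (fun _ _ => twinProj_or_twinLink_of_twinArc hA)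

lemma oneOrTwoSteps_twinLink_of_transGen (h : TransGen (twinLink v u auv avu) x y) :
    OneOrTwoSteps (twinLink v u auv avu) x y := by
  obtain ⟨_, hx, -⟩ := TransGen.head'_iff.mp h
  obtain ⟨_, -, hy⟩ := TransGen.tail'_iff.mp h
  rcases hx with ⟨rfl, -, h₁⟩ | ⟨rfl, -, h₁⟩ <;> rcases hy with ⟨-, rfl, h₂⟩ | ⟨-, rfl, h₂⟩
  · exact .inl (.inl ⟨rfl, rfl, h₁⟩)
  · exact .inr ⟨v, .inl ⟨rfl, rfl, h₁⟩, .inr ⟨rfl, rfl, h₂⟩⟩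
  · exact .inr ⟨u, .inr ⟨rfl, rfl, h₁⟩, .inl ⟨rfl, rfl, h₂⟩⟩
  · exact .inl (.inr ⟨rfl, rfl, h₁⟩)

lemma oneOrTwoSteps_twinArc_of_twinProj
    (h : OneOrTwoSteps A (twinProj v u x) (twinProj v u y)) :
    OneOrTwoSteps (twinArc A v u auv avu) x y := by
  rcases h with h | ⟨w, hxw, hwy⟩
  · by_cases hy : y = u
    · by_cases hx : x = u
      · subst hx hy
        -- a loop at `v` yields the closed walk `u → v → u`
        rw [twinProj_self] at h
        exact .inr ⟨v, twinArc_of_twinProj_left (by rwa [twinProj_self]),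
          twinArc_of_twinProj_right (by rwa [twinProj_self])⟩
      · exact .inl (twinArc_of_twinProj_right (by rwa [twinProj_of_ne hx] at h))
    · exact .inl (twinArc_of_twinProj_left (by rwa [twinProj_of_ne hy] at h))
  · exact .inr ⟨w, twinArc_of_twinProj_left hxw, twinArc_of_twinProj_right hwy⟩

end Twin

namespace TwinBuilt

variable {V : Finset ℕ} {A : ℕ → ℕ → Prop}

lemma mem_of_arc (h : TwinBuilt V A) {a b : ℕ} (hab : A a b) : a ∈ V ∧ b ∈ V := by
  induction h generalizing a b with
  | single v => exact hab.elim
  | union _ _ _ ih₁ ih₂ =>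
    rcases hab with hab | hab
    · exact (ih₁ hab).imp (Finset.mem_union_left _) (Finset.mem_union_left _)
    · exact (ih₂ hab).imp (Finset.mem_union_right _) (Finset.mem_union_right _)
  | twin v u auv avu hv _ _ ih =>
    rcases hab with hab | ⟨rfl, rfl, -⟩ | ⟨rfl, rfl, -⟩ | ⟨rfl, hab⟩ | ⟨rfl, hab⟩
    · exact (ih hab).imp Finset.mem_insert_of_mem Finset.mem_insert_of_mem
    · exact ⟨Finset.mem_insert_self _ _, Finset.mem_insert_of_mem hv⟩
    · exact ⟨Finset.mem_insert_of_mem hv, Finset.mem_insert_self _ _⟩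
    · exact ⟨Finset.mem_insert_self _ _, Finset.mem_insert_of_mem (ih hab).2⟩
    · exact ⟨Finset.mem_insert_of_mem (ih hab).1, Finset.mem_insert_self _ _⟩

theorem oneOrTwoSteps_of_transGen (h : TwinBuilt V A) {x y : ℕ} (hxy : TransGen A x y) :
    OneOrTwoSteps A x y := by
  induction h generalizing x y with
  | single v =>
    obtain ⟨_, hx, -⟩ := TransGen.head'_iff.mp hxy
    exact hx.elim
  | union hd h₁ h₂ ih₁ ih₂ =>
    rcases hxy.or_of_disjoint (fun _ _ => h₁.mem_of_arc) (fun _ _ => h₂.mem_of_arc)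
      (Finset.disjoint_coe.mpr hd) with h | h
    · exact (ih₁ h).mono fun _ _ => Or.inl
    · exact (ih₂ h).mono fun _ _ => Or.inr
  | @twin _ A v u auv avu hv hu hV ih =>
    have hvu : v ≠ u := ne_of_mem_of_not_mem hv hu
    have hA : ∀ a b, A a b → a ≠ u ∧ b ≠ u := fun a b hab =>
      (hV.mem_of_arc hab).imp (ne_of_mem_of_not_mem · hu) (ne_of_mem_of_not_mem · hu)
    rcases transGen_twinProj_or_twinLink hvu hA hxy with h | h
    · exact oneOrTwoSteps_twinArc_of_twinProj (ih h)
    · exact (oneOrTwoSteps_twinLink_of_transGen h).mono fun _ _ => twinArc_of_twinLink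

end TwinBuilt

lemma reflTransGen_of_walkLen {A : ℕ → ℕ → Prop} :
    ∀ {n x y : ℕ}, walkLen A n x y → ReflTransGen A x y
  | 0, _, _, h => h ▸ .refl
  | _ + 1, _, _, ⟨_, hxw, hw⟩ => .head hxw (reflTransGen_of_walkLen hw)

lemma ddist_le_of_walkLen {A : ℕ → ℕ → Prop} {n x y : ℕ} (h : walkLen A n x y) :
    ddist A x y ≤ n :=
  Nat.sInf_le h

theorem stmt_16_general (V : Finset ℕ) (A : ℕ → ℕ → Prop) (h : TwinBuilt V A)
    (hsc : StronglyConn A V) :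
    ∀ u ∈ V, ∀ v ∈ V, ddist A u v ≤ 2 := by
  intro u hu v hv
  obtain ⟨n, hn⟩ := hsc u hu v hv
  rcases reflTransGen_iff_eq_or_transGen.mp (reflTransGen_of_walkLen hn) with rfl | huv
  · exact (ddist_le_of_walkLen (n := 0) rfl).trans zero_le_two
  have huv' : TransGen A u v := TransGen.mono (fun _ _ hab => hab.1) _ _ huv
  rcases h.oneOrTwoSteps_of_transGen huv' with huv | ⟨w, huw, hwv⟩
  · exact (ddist_le_of_walkLen (n := 1) ⟨v, huv, rfl⟩).trans one_le_two
  · exact ddist_le_of_walkLen (n := 2) ⟨w, huw, v, hwv, rfl⟩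

theorem stmt_16 (V : Finset ℕ) (A : ℕ → ℕ → Prop) (h : TwinBuilt V A)
    (hsc : StronglyConn A V) (hcard : 2 ≤ V.card) :
    ∀ u ∈ V, ∀ v ∈ V, ddist A u v ≤ 2 :=
  stmt_16_general V A h hsc
end

section
/- Any digraph on 4 vertices whose underlying undirected graph is a 4-cycle and which is strongly connected contains two vertices with a bidirected pair of arcs between them, or contains no pair of directed twins. -/
/-! Directed twins `x`, `y` have the same in- and out-neighbours outside `{x, y}`. In a
4-cycle, a neighbour `w` of `x` other than `y` is therefore also a neighbour of `y`, so
`x`, `y` are opposite and `w` is adjacent to nothing else. Without bidirected arcs the twin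
condition makes both arcs at `w` point into `w`, or both out of it, so `w` is a sink or a
source, which strong connectivity forbids. -/

theorem exists_rel_of_walkLen_succ {R : ℕ → ℕ → Prop} :
    ∀ {n u v : ℕ}, walkLen R (n + 1) u v → ∃ z, R z v
  | 0, u, _, ⟨_, h, rfl⟩ => ⟨u, h⟩
  | _ + 1, _, _, ⟨_, _, h⟩ => exists_rel_of_walkLen_succ h

namespace StronglyConn

variable {A : ℕ → ℕ → Prop} {V : Finset ℕ} {u v : ℕ}

theorem exists_arc_from (hsc : StronglyConn A V) (hu : u ∈ V) (hv : v ∈ V) (huv : u ≠ v) :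
    ∃ z, A u z := by
  obtain ⟨n, hwalk⟩ := hsc u hu v hv
  cases n with
  | zero => exact absurd hwalk huv
  | succ n =>
    obtain ⟨z, hz, -⟩ := hwalk
    exact ⟨z, hz.1⟩

theorem exists_arc_to (hsc : StronglyConn A V) (hu : u ∈ V) (hv : v ∈ V) (huv : u ≠ v) :
    ∃ z, A z v := by
  obtain ⟨n, hwalk⟩ := hsc u hu v hv
  cases n with
  | zero => exact absurd hwalk huv
  | succ n =>
    obtain ⟨z, hz⟩ := exists_rel_of_walkLen_succ hwalk
    exact ⟨z, hz.1⟩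

end StronglyConn

namespace DTwins

variable {A : ℕ → ℕ → Prop} {x y w : ℕ}

theorem arc_from_iff (ht : DTwins A x y) (hwx : w ≠ x) (hwy : w ≠ y) : A x w ↔ A y w := by
  simpa [hwx, hwy] using Set.ext_iff.1 ht.2.2 w

theorem arc_to_iff (ht : DTwins A x y) (hwx : w ≠ x) (hwy : w ≠ y) : A w x ↔ A w y := by
  simpa [hwx, hwy] using Set.ext_iff.1 ht.2.1 w

theorem adj_iff (ht : DTwins A x y) (hwx : w ≠ x) (hwy : w ≠ y) :
    (A x w ∨ A w x) ↔ (A y w ∨ A w y) :=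
  or_congr (ht.arc_from_iff hwx hwy) (ht.arc_to_iff hwx hwy)

theorem sink_or_source_of_neighbors_eq (ht : DTwins A x y) (hwx : w ≠ x) (hwy : w ≠ y)
    (hadj : A x w ∨ A w x) (hnbr : ∀ z, A w z ∨ A z w → z = x ∨ z = y)
    (hx : ¬(A x w ∧ A w x)) (hy : ¬(A y w ∧ A w y)) :
    (∀ z, ¬A w z) ∨ ∀ z, ¬A z w := by
  rcases hadj with hx_in | hx_out
  · have hy_in := (ht.arc_from_iff hwx hwy).1 hx_in
    refine Or.inl fun z hwz => ?_
    rcases hnbr z (Or.inl hwz) with rfl | rfl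
    exacts [hx ⟨hx_in, hwz⟩, hy ⟨hy_in, hwz⟩]
  · have hy_out := (ht.arc_to_iff hwx hwy).1 hx_out
    refine Or.inr fun z hzw => ?_
    rcases hnbr z (Or.inr hzw) with rfl | rfl
    exacts [hx ⟨hzw, hx_out⟩, hy ⟨hzw, hy_out⟩]

end DTwins

def C4Adj (i j : ℕ) : Prop :=
  j = (i + 1) % 4 ∨ i = (j + 1) % 4

namespace C4Adj

theorem ne {i j : ℕ} (h : C4Adj i j) : i ≠ j := by
  unfold C4Adj at h
  omega

theorem exists_adj_ne {i : ℕ} (hi : i < 4) (j : ℕ) : ∃ k < 4, k ≠ j ∧ C4Adj i k := by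
  by_cases h : j = (i + 1) % 4
  · exact ⟨(i + 3) % 4, by omega, by omega, Or.inr (by omega)⟩
  · exact ⟨(i + 1) % 4, by omega, Ne.symm h, Or.inl rfl⟩

theorem eq_or_eq_of_adj_of_adj {i j k l : ℕ} (hi : i < 4) (hj : j < 4) (hl : l < 4)
    (hij : i ≠ j) (hik : C4Adj i k) (hjk : C4Adj j k) (hkl : C4Adj k l) : l = i ∨ l = j := by
  unfold C4Adj at *
  omega

end C4Adj

theorem stmt_18 (V : Finset ℕ) (A : ℕ → ℕ → Prop)
    (hA : ∀ x y, A x y → x ∈ V ∧ y ∈ V)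
    (c : ℕ → ℕ) (hinj : ∀ i < 4, ∀ j < 4, c i = c j → i = j)
    (hV : V = (Finset.range 4).image c)
    (hcyc : ∀ i < 4, ∀ j < 4,
      ((A (c i) (c j) ∨ A (c j) (c i)) ↔ (j = (i + 1) % 4 ∨ i = (j + 1) % 4)))
    (hsc : StronglyConn A V) :
    (∃ x ∈ V, ∃ y ∈ V, x ≠ y ∧ A x y ∧ A y x) ∨
      ¬ ∃ x ∈ V, ∃ y ∈ V, DTwins A x y := by
  refine or_iff_not_imp_left.2 fun hbi => ?_
  rintro ⟨x, hx, y, hy, htw⟩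
  have hmem : ∀ z ∈ V, ∃ l < 4, c l = z := by simp [hV]
  have hmem_of_adj : ∀ u z, A u z ∨ A z u → z ∈ V :=
    fun u z h => h.elim (fun h => (hA _ _ h).2) fun h => (hA _ _ h).1
  have hne : ∀ {a b}, a < 4 → b < 4 → a ≠ b → c a ≠ c b :=
    fun ha hb hab h => hab (hinj _ ha _ hb h)
  obtain ⟨i, hi, rfl⟩ := hmem x hx
  obtain ⟨j, hj, rfl⟩ := hmem y hy
  have hij : i ≠ j := by rintro rfl; exact htw.1 rfl
  obtain ⟨k, hk, hkj, hik⟩ := C4Adj.exists_adj_ne hi j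
  have hwx := hne hk hi hik.ne.symm
  have hwy := hne hk hj hkj
  have hxw := (hcyc i hi k hk).2 hik
  have hw : c k ∈ V := hmem_of_adj _ _ hxw
  have hjk : C4Adj j k := (hcyc j hj k hk).1 ((htw.adj_iff hwx hwy).1 hxw)
  have hnbr : ∀ z, A (c k) z ∨ A z (c k) → z = c i ∨ z = c j := by
    intro z hz
    obtain ⟨l, hl, rfl⟩ := hmem z (hmem_of_adj _ _ hz)
    rcases C4Adj.eq_or_eq_of_adj_of_adj hi hj hl hij hik hjk ((hcyc k hk l hl).1 hz)
      with rfl | rfl <;> simp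
  have hnobi : ∀ a ∈ V, ∀ b ∈ V, a ≠ b → ¬(A a b ∧ A b a) :=
    fun a ha b hb hab h => hbi ⟨a, ha, b, hb, hab, h⟩
  rcases htw.sink_or_source_of_neighbors_eq hwx hwy hxw hnbr (hnobi _ hx _ hw hwx.symm)
      (hnobi _ hy _ hw hwy.symm) with hsink | hsource
  · exact (hsc.exists_arc_from hw hx hwx).elim hsink
  · exact (hsc.exists_arc_to hx hw hwx.symm).elim hsource
end

section
/- A digraph whose underlying undirected graph is a path on n ≥ 4 vertices, with both end-edges bidirected (i.e., both arcs present between each endpoint and its unique neighbor), is not a twin-distance-hereditary digraph. -/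
/- The last construction step of a twin-distance-hereditary digraph cannot produce such a path.
A disjoint union is disconnected, whereas the path is weakly connected. A new twin would make two
vertices of the path have the same neighbours outside themselves, which no two vertices of a path
on at least four vertices do. A new pendant vertex is joined to the rest by a single arc, whereas
an interior vertex of the path has two neighbours and an end vertex is joined by a bidirected edge. -/

def Adjacent (A : ℕ → ℕ → Prop) (x y : ℕ) : Prop :=
  A x y ∨ A y x

def IsUnderlyingPath (A : ℕ → ℕ → Prop) (n : ℕ) (c : ℕ → ℕ) : Prop :=
  ∀ i < n, ∀ j < n, (Adjacent A (c i) (c j) ↔ (j = i + 1 ∨ i = j + 1))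

def SameNeighbors (A : ℕ → ℕ → Prop) (x y : ℕ) : Prop :=
  ∀ w, w ≠ x → w ≠ y → (Adjacent A w x ↔ Adjacent A w y)

def IsPendant (A : ℕ → ℕ → Prop) (u a : ℕ) : Prop :=
  (∀ w, Adjacent A u w → w = a) ∧ ¬ (A u a ∧ A a u)

lemma exists_separating_index {n p q : ℕ} (hn : 4 ≤ n) (hp : p < n) (hq : q < n) (hpq : p ≠ q) :
    ∃ r < n, r ≠ p ∧ r ≠ q ∧ ¬ ((p = r + 1 ∨ r = p + 1) ↔ (q = r + 1 ∨ r = q + 1)) := by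
  -- a neighbour of `min p q` that is not one of `max p q`, or the other way round if `p, q ≤ 2`
  refine ⟨if min p q = 0 ∧ max p q = 1 then 2 else if min p q = 0 ∧ max p q = 2 then 3 else
    if max p q ≤ min p q + 2 then min p q - 1 else min p q + 1, ?_⟩
  split_ifs <;> omega

namespace IsUnderlyingPath

variable {A : ℕ → ℕ → Prop} {n : ℕ} {c : ℕ → ℕ}

lemma iff_zero_of_arc (h : IsUnderlyingPath A n c) {S : ℕ → Prop}
    (hS : ∀ x y, A x y → (S x ↔ S y)) : ∀ i < n, (S (c i) ↔ S (c 0)) := by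
  intro i
  induction i with
  | zero => intro _; rfl
  | succ i ih =>
    intro hi
    have hstep : S (c i) ↔ S (c (i + 1)) := by
      rcases (h i (by omega) (i + 1) hi).mpr (Or.inl rfl) with hA | hA
      · exact hS _ _ hA
      · exact (hS _ _ hA).symm
    exact hstep.symm.trans (ih (by omega))

lemma not_sameNeighbors (h : IsUnderlyingPath A n c) (hn : 4 ≤ n)
    (hinj : ∀ i < n, ∀ j < n, c i = c j → i = j) {p q : ℕ} (hp : p < n) (hq : q < n)
    (hpq : p ≠ q) (htw : SameNeighbors A (c p) (c q)) : False := by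
  obtain ⟨r, hr, hrp, hrq, hsep⟩ := exists_separating_index hn hp hq hpq
  have hne : ∀ i < n, r ≠ i → c r ≠ c i := fun i hi hri e => hri (hinj r hr i hi e)
  exact hsep ((h r hr p hp).symm.trans
    ((htw (c r) (hne p hp hrp) (hne q hq hrq)).trans (h r hr q hq)))

lemma not_isPendant (h : IsUnderlyingPath A n c) (hinj : ∀ i < n, ∀ j < n, c i = c j → i = j)
    (h01 : A (c 0) (c 1)) (h10 : A (c 1) (c 0))
    (hend1 : A (c (n - 1)) (c (n - 2))) (hend2 : A (c (n - 2)) (c (n - 1)))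
    {p a : ℕ} (hp : p < n) (hpend : IsPendant A (c p) a) : False := by
  obtain ⟨hnbr, hsingle⟩ := hpend
  rcases Nat.eq_zero_or_pos p with rfl | hp0
  · obtain rfl := hnbr _ (Or.inl h01)
    exact hsingle ⟨h01, h10⟩
  rcases Nat.lt_or_ge p (n - 1) with hpn | hpn
  · have hsucc := hnbr _ ((h p hp (p + 1) (by omega)).mpr (Or.inl rfl))
    have hpred := hnbr _ ((h p hp (p - 1) (by omega)).mpr (Or.inr (by omega)))
    have := hinj _ (by omega) _ (by omega) (hsucc.trans hpred.symm)
    omega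
  · obtain rfl : p = n - 1 := by omega
    obtain rfl := hnbr _ (Or.inl hend1)
    exact hsingle ⟨hend1, hend2⟩

end IsUnderlyingPath

namespace TwinDH

lemma mem_of_arc {V : Finset ℕ} {A : ℕ → ℕ → Prop} (h : TwinDH V A) :
    ∀ x y, A x y → x ∈ V ∧ y ∈ V := by
  induction h with
  | single v => intro x y h; exact h.elim
  | union _ _ _ ih₁ ih₂ =>
    rintro x y (h | h)
    · exact (ih₁ x y h).imp (Finset.mem_union_left _) (Finset.mem_union_left _)
    · exact (ih₂ x y h).imp (Finset.mem_union_right _) (Finset.mem_union_right _)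
  | twin v u auv avu hv hu _ ih =>
    rintro x y (h | ⟨rfl, rfl, -⟩ | ⟨rfl, rfl, -⟩ | ⟨rfl, h⟩ | ⟨rfl, h⟩)
    · exact (ih x y h).imp Finset.mem_insert_of_mem Finset.mem_insert_of_mem
    · exact ⟨Finset.mem_insert_self _ _, Finset.mem_insert_of_mem hv⟩
    · exact ⟨Finset.mem_insert_of_mem hv, Finset.mem_insert_self _ _⟩
    · exact ⟨Finset.mem_insert_self _ _, Finset.mem_insert_of_mem (ih v y h).2⟩
    · exact ⟨Finset.mem_insert_of_mem (ih x v h).1, Finset.mem_insert_self _ _⟩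
  | pendPlus a u ha _ _ ih =>
    rintro x y (h | ⟨rfl, rfl⟩)
    · exact (ih x y h).imp Finset.mem_insert_of_mem Finset.mem_insert_of_mem
    · exact ⟨Finset.mem_insert_self _ _, Finset.mem_insert_of_mem ha⟩
  | pendMinus a u ha _ _ ih =>
    rintro x y (h | ⟨rfl, rfl⟩)
    · exact (ih x y h).imp Finset.mem_insert_of_mem Finset.mem_insert_of_mem
    · exact ⟨Finset.mem_insert_of_mem ha, Finset.mem_insert_self _ _⟩

lemma nonempty {V : Finset ℕ} {A : ℕ → ℕ → Prop} (h : TwinDH V A) : V.Nonempty := by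
  induction h with
  | single v => exact Finset.singleton_nonempty v
  | union _ _ _ ih₁ => exact ih₁.mono Finset.subset_union_left
  | twin _ u => exact Finset.insert_nonempty u _
  | pendPlus _ u => exact Finset.insert_nonempty u _
  | pendMinus _ u => exact Finset.insert_nonempty u _

end TwinDH

section Constructions

variable {V : Finset ℕ} {A : ℕ → ℕ → Prop}

lemma mem_iff_of_union_arc {V₂ : Finset ℕ} {A₂ : ℕ → ℕ → Prop} (hd : Disjoint V V₂)
    (hA : ∀ x y, A x y → x ∈ V ∧ y ∈ V) (hA₂ : ∀ x y, A₂ x y → x ∈ V₂ ∧ y ∈ V₂)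
    {x y : ℕ} (hxy : A x y ∨ A₂ x y) : x ∈ V ↔ y ∈ V := by
  rcases hxy with h | h
  · exact iff_of_true (hA x y h).1 (hA x y h).2
  · exact iff_of_false (Finset.disjoint_right.mp hd (hA₂ x y h).1)
      (Finset.disjoint_right.mp hd (hA₂ x y h).2)

lemma twinArc_sameNeighbors (hA : ∀ x y, A x y → x ∈ V ∧ y ∈ V) {v u : ℕ} (hv : v ∈ V)
    (hu : u ∉ V) (auv avu : Prop) : SameNeighbors (twinArc A v u auv avu) u v := by
  intro w hwu hwv
  have hin : ∀ x, ¬ A x u := fun x h => hu (hA x u h).2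
  have hout : ∀ x, ¬ A u x := fun x h => hu (hA u x h).1
  have hvu : v ≠ u := fun e => hu (e ▸ hv)
  simp [Adjacent, twinArc, hin, hout, hwu, hwv, hvu]

lemma isPendant_pendPlus (hA : ∀ x y, A x y → x ∈ V ∧ y ∈ V) {a u : ℕ} (ha : a ∈ V)
    (hu : u ∉ V) : IsPendant (fun x y => A x y ∨ (x = u ∧ y = a)) u a := by
  have hout : ∀ x, ¬ A u x := fun x h => hu (hA u x h).1
  have hin : ∀ x, ¬ A x u := fun x h => hu (hA x u h).2
  have hua : u ≠ a := fun e => hu (e ▸ ha)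
  refine ⟨fun w hw => ?_, fun ⟨_, h⟩ => ?_⟩ <;> simp_all [Adjacent]

lemma isPendant_pendMinus (hA : ∀ x y, A x y → x ∈ V ∧ y ∈ V) {a u : ℕ} (ha : a ∈ V)
    (hu : u ∉ V) : IsPendant (fun x y => A x y ∨ (x = a ∧ y = u)) u a := by
  have hout : ∀ x, ¬ A u x := fun x h => hu (hA u x h).1
  have hin : ∀ x, ¬ A x u := fun x h => hu (hA x u h).2
  have hua : u ≠ a := fun e => hu (e ▸ ha)
  refine ⟨fun w hw => ?_, fun ⟨h, _⟩ => ?_⟩ <;> simp_all [Adjacent]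

end Constructions

theorem stmt_19_general (n : ℕ) (hn : 4 ≤ n) (c : ℕ → ℕ)
    (hinj : ∀ i < n, ∀ j < n, c i = c j → i = j)
    (V : Finset ℕ) (hV : V = (Finset.range n).image c)
    (A : ℕ → ℕ → Prop)
    (hpath : ∀ i < n, ∀ j < n,
      ((A (c i) (c j) ∨ A (c j) (c i)) ↔ (j = i + 1 ∨ i = j + 1)))
    (h01 : A (c 0) (c 1)) (h10 : A (c 1) (c 0))
    (hend1 : A (c (n - 1)) (c (n - 2))) (hend2 : A (c (n - 2)) (c (n - 1))) :
    ¬ TwinDH V A := by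
  intro h
  have hP : IsUnderlyingPath A n c := hpath
  have hcV : ∀ w ∈ V, ∃ i < n, c i = w := by simp [hV]
  cases h with
  | single => exact h01
  | union hd h₁ h₂ =>
    obtain ⟨_, hx⟩ := h₁.nonempty
    obtain ⟨_, hy⟩ := h₂.nonempty
    obtain ⟨i, hi, rfl⟩ := hcV _ (Finset.mem_union_left _ hx)
    obtain ⟨j, hj, rfl⟩ := hcV _ (Finset.mem_union_right _ hy)
    have hconst :=
      hP.iff_zero_of_arc fun _ _ => mem_iff_of_union_arc hd h₁.mem_of_arc h₂.mem_of_arc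
    exact Finset.disjoint_left.mp hd ((hconst j hj).mpr ((hconst i hi).mp hx)) hy
  | twin v u auv avu hv hu h' =>
    obtain ⟨p, hp, rfl⟩ := hcV u (Finset.mem_insert_self _ _)
    obtain ⟨q, hq, rfl⟩ := hcV v (Finset.mem_insert_of_mem hv)
    exact hP.not_sameNeighbors hn hinj hp hq (by rintro rfl; exact hu hv)
      (twinArc_sameNeighbors h'.mem_of_arc hv hu auv avu)
  | pendPlus a u ha hu h' =>
    obtain ⟨p, hp, rfl⟩ := hcV u (Finset.mem_insert_self _ _)
    exact hP.not_isPendant hinj h01 h10 hend1 hend2 hp (isPendant_pendPlus h'.mem_of_arc ha hu)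
  | pendMinus a u ha hu h' =>
    obtain ⟨p, hp, rfl⟩ := hcV u (Finset.mem_insert_self _ _)
    exact hP.not_isPendant hinj h01 h10 hend1 hend2 hp (isPendant_pendMinus h'.mem_of_arc ha hu)

theorem stmt_19 (n : ℕ) (hn : 4 ≤ n) (c : ℕ → ℕ)
    (hinj : ∀ i < n, ∀ j < n, c i = c j → i = j)
    (V : Finset ℕ) (hV : V = (Finset.range n).image c)
    (A : ℕ → ℕ → Prop) (hA : ∀ x y, A x y → x ∈ V ∧ y ∈ V)
    (hpath : ∀ i < n, ∀ j < n,
      ((A (c i) (c j) ∨ A (c j) (c i)) ↔ (j = i + 1 ∨ i = j + 1)))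
    (h01 : A (c 0) (c 1)) (h10 : A (c 1) (c 0))
    (hend1 : A (c (n - 1)) (c (n - 2))) (hend2 : A (c (n - 2)) (c (n - 1))) :
    ¬ TwinDH V A :=
  stmt_19_general n hn c hinj V hV A hpath h01 h10 hend1 hend2
end
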